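/- arXiv:1310.1041 — 2 statements merged into one kernel-verified Lean document; each statement's English description precedes it below -/
import Mathlib

section
/- Let d ≥ 1 and L ≥ 1 be integers, and let E ⊆ ℤ^d. Suppose there is a nearest-neighbor path with all its vertices in E whose first vertex lies in B_∞(0, 2L) and whose last vertex lies in S_∞(0, 4L). Then there exists x ∈ {-L, L}^d ⊆ ℤ^d such that there is a nearest-neighbor path with all its vertices in E whose first vertex lies in B_∞(x, L) and whose last vertex lies in S_∞(x, 3L). -/
/-!
Choose the corner `x ∈ {-L, L}^d` lying in the same orthant as the first vertex `y` of the
crossing; since `|y|_∞ ≤ 2L`, every coordinate of `y - x` has absolute value at most `L`.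
The last vertex has `|·|_∞ = 4L`, so its distance to `x` is at least `4L - L = 3L`. Along a
nearest-neighbor path the `ℓ^∞`-distance to `x` changes by at most one per step, so it takes the
value `3L` at some vertex, and the path stopped there is the required crossing.
-/

/-- The `ℓ^∞`-norm of a point of `ℤ^d`. -/
def normInf {d : ℕ} (x : Fin d → ℤ) : ℕ := Finset.univ.sup fun i => (x i).natAbs

/-- The `ℓ¹`-norm of a point of `ℤ^d`. -/
def norm1 {d : ℕ} (x : Fin d → ℤ) : ℕ := ∑ i, (x i).natAbs

/-- `p 0, p 1, …, p n` is a nearest-neighbor path all of whose vertices lie in `E`. -/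
def IsNNPathIn {d : ℕ} (E : Set (Fin d → ℤ)) (p : ℕ → (Fin d → ℤ)) (n : ℕ) : Prop :=
  (∀ i < n, norm1 (p (i + 1) - p i) = 1) ∧ ∀ i ≤ n, p i ∈ E

theorem Nat.exists_eq_of_le_of_succ_le {f : ℕ → ℕ} {c n : ℕ} (h0 : f 0 ≤ c) (hn : c ≤ f n)
    (hstep : ∀ i < n, f (i + 1) ≤ f i + 1) : ∃ m ≤ n, f m = c := by
  induction n with
  | zero => exact ⟨0, le_rfl, le_antisymm h0 hn⟩
  | succ n ih =>
    by_cases hc : c ≤ f n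
    · obtain ⟨m, hmn, hm⟩ := ih hc fun i hi => hstep i (by omega)
      exact ⟨m, by omega, hm⟩
    · exact ⟨n + 1, le_rfl, by have := hstep n (by omega); omega⟩

section Norms

variable {d : ℕ}

theorem natAbs_le_normInf (x : Fin d → ℤ) (i : Fin d) : (x i).natAbs ≤ normInf x :=
  Finset.le_sup (f := fun i => (x i).natAbs) (Finset.mem_univ i)

theorem normInf_le_iff {x : Fin d → ℤ} {r : ℕ} : normInf x ≤ r ↔ ∀ i, (x i).natAbs ≤ r := by
  simp [normInf, Finset.sup_le_iff]

theorem normInf_le_norm1 (x : Fin d → ℤ) : normInf x ≤ norm1 x :=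
  normInf_le_iff.2 fun i =>
    Finset.single_le_sum (f := fun i => (x i).natAbs) (fun _ _ => Nat.zero_le _)
      (Finset.mem_univ i)

theorem normInf_add_le (x y : Fin d → ℤ) : normInf (x + y) ≤ normInf x + normInf y :=
  normInf_le_iff.2 fun i =>
    (Int.natAbs_add_le (x i) (y i)).trans
      (Nat.add_le_add (natAbs_le_normInf x i) (natAbs_le_normInf y i))

theorem normInf_le_normInf_sub_add (x y : Fin d → ℤ) :
    normInf x ≤ normInf (x - y) + normInf y := by
  simpa using normInf_add_le (x - y) y

end Norms

theorem exists_corner_normInf_sub_le {d L : ℕ} {y : Fin d → ℤ} (hy : normInf y ≤ 2 * L) :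
    ∃ x : Fin d → ℤ, (∀ i, x i = (L : ℤ) ∨ x i = -(L : ℤ)) ∧ normInf (y - x) ≤ L := by
  refine ⟨fun i => if 0 ≤ y i then (L : ℤ) else -(L : ℤ),
    fun i => by dsimp only; split_ifs <;> simp, normInf_le_iff.2 fun i => ?_⟩
  have hyi : (y i).natAbs ≤ 2 * L := (natAbs_le_normInf y i).trans hy
  simp only [Pi.sub_apply]
  split_ifs <;> omega

theorem normInf_le_of_corner {d L : ℕ} {x : Fin d → ℤ} (hx : ∀ i, x i = (L : ℤ) ∨ x i = -(L : ℤ)) :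
    normInf x ≤ L :=
  normInf_le_iff.2 fun i => by rcases hx i with h | h <;> simp [h]

namespace IsNNPathIn

variable {d : ℕ} {E : Set (Fin d → ℤ)} {p : ℕ → (Fin d → ℤ)} {n : ℕ}

theorem of_le (hp : IsNNPathIn E p n) {m : ℕ} (hm : m ≤ n) : IsNNPathIn E p m :=
  ⟨fun i hi => hp.1 i (by omega), fun i hi => hp.2 i (by omega)⟩

theorem normInf_sub_succ_le (hp : IsNNPathIn E p n) (x : Fin d → ℤ) {i : ℕ} (hi : i < n) :
    normInf (p (i + 1) - x) ≤ normInf (p i - x) + 1 := by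
  calc normInf (p (i + 1) - x)
      ≤ normInf (p (i + 1) - x - (p i - x)) + normInf (p i - x) :=
        normInf_le_normInf_sub_add _ _
    _ ≤ norm1 (p (i + 1) - p i) + normInf (p i - x) := by
        rw [sub_sub_sub_cancel_right]
        exact Nat.add_le_add_right (normInf_le_norm1 _) _
    _ = normInf (p i - x) + 1 := by rw [hp.1 i hi, add_comm]

theorem exists_normInf_sub_eq (hp : IsNNPathIn E p n) (x : Fin d → ℤ) {r : ℕ}
    (h0 : normInf (p 0 - x) ≤ r) (hn : r ≤ normInf (p n - x)) :
    ∃ m ≤ n, normInf (p m - x) = r :=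
  Nat.exists_eq_of_le_of_succ_le h0 hn fun _ hi => hp.normInf_sub_succ_le x hi

end IsNNPathIn

theorem stmt8_general (d L : ℕ) (E : Set (Fin d → ℤ))
    (hpath : ∃ (p : ℕ → (Fin d → ℤ)) (n : ℕ), IsNNPathIn E p n ∧
      normInf (p 0) ≤ 2 * L ∧ normInf (p n) = 4 * L) :
    ∃ x : Fin d → ℤ, (∀ i, x i = (L : ℤ) ∨ x i = -(L : ℤ)) ∧
      ∃ (p : ℕ → (Fin d → ℤ)) (n : ℕ), IsNNPathIn E p n ∧
        normInf (p 0 - x) ≤ L ∧ normInf (p n - x) = 3 * L := by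
  obtain ⟨p, n, hp, h0, hn⟩ := hpath
  obtain ⟨x, hx, hstart⟩ := exists_corner_normInf_sub_le h0
  have hend : 3 * L ≤ normInf (p n - x) := by
    have := normInf_le_normInf_sub_add (p n) x
    have := normInf_le_of_corner hx
    omega
  obtain ⟨m, hmn, hm⟩ := hp.exists_normInf_sub_eq x (hstart.trans (by omega)) hend
  exact ⟨x, hx, p, m, hp.of_le hmn, hstart, hm⟩

/-- Deterministic covering step: a crossing of `E` from `B_∞(0,2L)` to `S_∞(0,4L)`
forces a crossing from `B_∞(x,L)` to `S_∞(x,3L)` for some `x ∈ {-L,L}^d`. -/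
theorem stmt8 (d L : ℕ) (hd : 1 ≤ d) (hL : 1 ≤ L) (E : Set (Fin d → ℤ))
    (hpath : ∃ (p : ℕ → (Fin d → ℤ)) (n : ℕ), IsNNPathIn E p n ∧
      normInf (p 0) ≤ 2 * L ∧ normInf (p n) = 4 * L) :
    ∃ x : Fin d → ℤ, (∀ i, x i = (L : ℤ) ∨ x i = -(L : ℤ)) ∧
      ∃ (p : ℕ → (Fin d → ℤ)) (n : ℕ), IsNNPathIn E p n ∧
        normInf (p 0 - x) ≤ L ∧ normInf (p n - x) = 3 * L :=
  stmt8_general d L E hpath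
end

section
/- Let d ≥ 1 be an integer, let c₆ ≥ 3 and N ≥ c₆ be integers, set N₀ = ⌊N/c₆⌋, and let ℓ ∈ (0, 1] be a real number. Suppose E ⊆ ℤ^d is such that there is a nearest-neighbor path with all its vertices in E, whose first vertex is 0 and whose last vertex lies in S₁(0, N·d). Then for every 0 ≤ n < N₀ there exist a point x_n ∈ S₁(0, n·c₆·d) and a self-avoiding nearest-neighbor path π_n of length ⌊ℓ·d⌋ starting at x_n, all of whose vertices lie in E ∩ B₁(0, N·d), such that for all 0 ≤ n < m < N₀ the ℓ¹-distance between the vertex sets of π_n and π_m is at least (c₆ − 2)·d. -/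
section Norm1

variable {d : ℕ}

@[simp]
lemma norm1_zero : norm1 (0 : Fin d → ℤ) = 0 := by
  simp [norm1]

lemma norm1_add_le (x y : Fin d → ℤ) : norm1 (x + y) ≤ norm1 x + norm1 y := by
  unfold norm1
  rw [← Finset.sum_add_distrib]
  exact Finset.sum_le_sum fun i _ => Int.natAbs_add_le _ _

lemma norm1_neg (x : Fin d → ℤ) : norm1 (-x) = norm1 x := by
  simp [norm1]

lemma norm1_sub_comm (x y : Fin d → ℤ) : norm1 (x - y) = norm1 (y - x) := by
  rw [← neg_sub, norm1_neg]

lemma norm1_le_add_norm1_sub (x y : Fin d → ℤ) : norm1 x ≤ norm1 y + norm1 (x - y) := by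
  simpa using norm1_add_le y (x - y)

end Norm1

lemma Nat.exists_eq_of_le_succ_of_le (f : ℕ → ℕ) {n v : ℕ} (hstep : ∀ i < n, f (i + 1) ≤ f i + 1)
    (h0 : f 0 ≤ v) (hn : v ≤ f n) : ∃ i ≤ n, f i = v := by
  induction n with
  | zero => exact ⟨0, le_rfl, le_antisymm h0 hn⟩
  | succ n ih =>
    by_cases h : v ≤ f n
    · obtain ⟨i, hi, hfi⟩ := ih (fun i hi => hstep i (by omega)) h
      exact ⟨i, by omega, hfi⟩
    · exact ⟨n + 1, le_rfl, by have := hstep n (by omega); omega⟩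

namespace IsNNPathIn

variable {d : ℕ} {E : Set (Fin d → ℤ)} {p : ℕ → Fin d → ℤ} {n : ℕ}

lemma norm1_le_succ (hp : IsNNPathIn E p n) {i : ℕ} (hi : i < n) :
    norm1 (p (i + 1)) ≤ norm1 (p i) + 1 := by
  simpa [hp.1 i hi] using norm1_le_add_norm1_sub (p (i + 1)) (p i)

lemma norm1_sub_le (hp : IsNNPathIn E p n) {j : ℕ} (hj : j ≤ n) : norm1 (p j - p 0) ≤ j := by
  induction j with
  | zero => simp
  | succ j ih =>
    have hsplit : p (j + 1) - p 0 = (p (j + 1) - p j) + (p j - p 0) := by abel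
    calc norm1 (p (j + 1) - p 0) ≤ norm1 (p (j + 1) - p j) + norm1 (p j - p 0) :=
          hsplit ▸ norm1_add_le _ _
      _ ≤ j + 1 := by rw [hp.1 j (by omega)]; have := ih (by omega); omega

lemma norm1_le (hp : IsNNPathIn E p n) {j : ℕ} (hj : j ≤ n) : norm1 (p j) ≤ norm1 (p 0) + j := by
  have := norm1_le_add_norm1_sub (p j) (p 0)
  have := hp.norm1_sub_le hj
  omega

lemma norm1_zero_le (hp : IsNNPathIn E p n) {j : ℕ} (hj : j ≤ n) :
    norm1 (p 0) ≤ norm1 (p j) + j := by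
  have := norm1_le_add_norm1_sub (p 0) (p j)
  rw [norm1_sub_comm] at this
  have := hp.norm1_sub_le hj
  omega

lemma exists_norm1_eq (hp : IsNNPathIn E p n) {v : ℕ} (h0 : norm1 (p 0) ≤ v)
    (hn : v ≤ norm1 (p n)) : ∃ i ≤ n, norm1 (p i) = v :=
  Nat.exists_eq_of_le_succ_of_le (fun i => norm1 (p i)) (fun _ hi => hp.norm1_le_succ hi) h0 hn

lemma mono {m : ℕ} (hp : IsNNPathIn E p n) (hm : m ≤ n) : IsNNPathIn E p m :=
  ⟨fun i hi => hp.1 i (by omega), fun i hi => hp.2 i (by omega)⟩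

lemma drop (hp : IsNNPathIn E p n) {k : ℕ} (hk : k ≤ n) : IsNNPathIn E (fun i => p (k + i)) (n - k) :=
  ⟨fun i hi => hp.1 (k + i) (by omega), fun i hi => hp.2 (k + i) (by omega)⟩

/-- The path with the loop between the equal vertices `p a = p b` cut out. -/
lemma shortcut (hp : IsNNPathIn E p n) {a b : ℕ} (hab : a < b) (hbn : b ≤ n) (heq : p a = p b) :
    IsNNPathIn E (fun i => if i ≤ a then p i else p (i + (b - a))) (n - (b - a)) := by
  have hskip : ∀ i, a ≤ i → (if i ≤ a then p i else p (i + (b - a))) = p (i + (b - a)) := by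
    intro i hi
    split_ifs with h
    · rw [show i = a by omega, heq, show a + (b - a) = b by omega]
    · rfl
  refine ⟨fun i hi => ?_, fun i hi => ?_⟩ <;> dsimp only
  · by_cases hia : i < a
    · simp only [if_pos (show i + 1 ≤ a by omega), if_pos hia.le]
      exact hp.1 i (by omega)
    · rw [hskip i (by omega), hskip (i + 1) (by omega),
        show i + 1 + (b - a) = i + (b - a) + 1 by omega]
      exact hp.1 _ (by omega)
  · split_ifs
    · exact hp.2 i (by omega)
    · exact hp.2 _ (by omega)

lemma exists_injOn (hp : IsNNPathIn E p n) :
    ∃ q m, IsNNPathIn E q m ∧ q 0 = p 0 ∧ q m = p n ∧ Set.InjOn q (Set.Iic m) := by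
  classical
  have hex : ∃ m, ∃ q, IsNNPathIn E q m ∧ q 0 = p 0 ∧ q m = p n := ⟨n, p, hp, rfl, rfl⟩
  obtain ⟨q, hq, hq0, hqm⟩ := Nat.find_spec hex
  refine ⟨q, Nat.find hex, hq, hq0, hqm, ?_⟩
  -- a repeated vertex would allow a strictly shorter path with the same endpoints
  have hne : ∀ a b, a < b → b ≤ Nat.find hex → q a ≠ q b := by
    intro a b hab hb heq
    refine Nat.find_min hex (m := Nat.find hex - (b - a)) (by omega)
      ⟨_, hq.shortcut hab hb heq, by simpa using hq0, ?_⟩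
    by_cases h : Nat.find hex - (b - a) ≤ a
    · rw [if_pos h, show Nat.find hex - (b - a) = a by omega, heq,
        show b = Nat.find hex by omega, hqm]
    · rw [if_neg h, Nat.sub_add_cancel (by omega), hqm]
  intro i hi j hj hij
  rcases lt_trichotomy i j with h | h | h
  · exact absurd hij (hne i j h hj)
  · exact h
  · exact absurd hij.symm (hne j i h hi)

lemma exists_injOn_of_norm1 (hp : IsNNPathIn E p n) {v L : ℕ} (h0 : norm1 (p 0) ≤ v)
    (hn : v + L ≤ norm1 (p n)) :
    ∃ q, norm1 (q 0) = v ∧ IsNNPathIn E q L ∧ Set.InjOn q (Set.Iic L) := by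
  obtain ⟨k, hk, hpk⟩ := hp.exists_norm1_eq h0 (by omega)
  obtain ⟨q, m, hq, hq0, hqm, hinj⟩ := (hp.drop hk).exists_injOn
  simp only [add_zero, Nat.add_sub_cancel' hk] at hq0 hqm
  have hLm : L ≤ m := by
    have := hq.norm1_le le_rfl
    rw [hq0, hqm, hpk] at this
    omega
  exact ⟨q, hq0 ▸ hpk, hq.mono hLm, hinj.mono (Set.Iic_subset_Iic.mpr hLm)⟩

end IsNNPathIn

lemma pos_of_lt_div {n c N : ℕ} (hn : n < N / c) : 0 < c :=
  Nat.pos_of_ne_zero (by rintro rfl; simp at hn)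

lemma mul_mul_add_le_of_lt_div {n c N : ℕ} (hn : n < N / c) (d : ℕ) :
    n * c * d + c * d ≤ N * d := by
  simpa [add_mul] using Nat.mul_le_mul_right d ((Nat.le_div_iff_mul_le (pos_of_lt_div hn)).mp hn)

theorem stmt15_general (d c₆ N : ℕ)
    (ℓ : ℝ) (hℓ1 : ℓ ≤ 1)
    (E : Set (Fin d → ℤ))
    (hpath : ∃ (p : ℕ → (Fin d → ℤ)) (n : ℕ), IsNNPathIn E p n ∧
      p 0 = 0 ∧ norm1 (p n) = N * d) :
    ∃ π : ℕ → ℕ → (Fin d → ℤ),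
      (∀ n < N / c₆,
        norm1 (π n 0) = n * c₆ * d ∧
        (∀ i < ⌊ℓ * (d : ℝ)⌋₊, norm1 (π n (i + 1) - π n i) = 1) ∧
        (∀ i ≤ ⌊ℓ * (d : ℝ)⌋₊, π n i ∈ E ∧ norm1 (π n i) ≤ N * d) ∧
        (∀ i ≤ ⌊ℓ * (d : ℝ)⌋₊, ∀ j ≤ ⌊ℓ * (d : ℝ)⌋₊, π n i = π n j → i = j)) ∧
      ∀ n m, n < m → m < N / c₆ →
        ∀ i ≤ ⌊ℓ * (d : ℝ)⌋₊, ∀ j ≤ ⌊ℓ * (d : ℝ)⌋₊,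
          (c₆ - 2) * d ≤ norm1 (π n i - π m j) := by
  obtain ⟨p, np, hp, hp0, hpn⟩ := hpath
  set L := ⌊ℓ * (d : ℝ)⌋₊
  have hLd : L ≤ d := Nat.floor_le_of_le (by nlinarith [(Nat.cast_nonneg d : (0 : ℝ) ≤ d)])
  have hshell : ∀ n < N / c₆, n * c₆ * d + c₆ * d ≤ N * d ∧ d ≤ c₆ * d := fun n hn =>
    ⟨mul_mul_add_le_of_lt_div hn d, Nat.le_mul_of_pos_left d (pos_of_lt_div hn)⟩
  have htrace : ∀ n, ∃ q, n < N / c₆ →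
      norm1 (q 0) = n * c₆ * d ∧ IsNNPathIn E q L ∧ Set.InjOn q (Set.Iic L) := fun n => by
    by_cases hn : n < N / c₆
    · obtain ⟨q, hq⟩ := hp.exists_injOn_of_norm1 (v := n * c₆ * d) (L := L) (by simp [hp0])
        (by have := hshell n hn; omega)
      exact ⟨q, fun _ => hq⟩
    · exact ⟨0, fun h => absurd h hn⟩
  choose π hπ using htrace
  refine ⟨π, fun n hn => ?_, fun n m hnm hm i hi j hj => ?_⟩
  · obtain ⟨h0, hq, hinj⟩ := hπ n hn
    exact ⟨h0, hq.1, fun i hi => ⟨hq.2 i hi, by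
      have := hq.norm1_le hi; have := hshell n hn; omega⟩, fun _ hi _ hj => hinj hi hj⟩
  · obtain ⟨hn0, hqn, -⟩ := hπ n (hnm.trans hm)
    obtain ⟨hm0, hqm, -⟩ := hπ m hm
    have hin := hqn.norm1_le hi
    have hjm := hqm.norm1_zero_le hj
    have htri := norm1_le_add_norm1_sub (π m j) (π n i)
    have hnm' : n * c₆ * d + c₆ * d ≤ m * c₆ * d := by
      simpa [add_mul] using Nat.mul_le_mul_right d (Nat.mul_le_mul_right c₆ hnm)
    rw [norm1_sub_comm] at htri
    rw [Nat.sub_mul]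
    generalize c₆ * d = D at *
    omega

/-- Extraction of well-separated local traces (displays (3.19), (3.22), Figure 2):
a nearest-neighbor path in `E` from `0` to `S₁(0, Nd)` yields, for each `n < N₀ = ⌊N/c₆⌋`,
a self-avoiding path `π_n` of length `⌊ℓd⌋` in `E ∩ B₁(0, Nd)` started on `S₁(0, n c₆ d)`,
the paths being pairwise at `ℓ¹`-distance at least `(c₆ - 2)d`. -/
theorem stmt15 (d c₆ N : ℕ) (hd : 1 ≤ d) (hc₆ : 3 ≤ c₆) (hN : c₆ ≤ N)
    (ℓ : ℝ) (hℓ0 : 0 < ℓ) (hℓ1 : ℓ ≤ 1)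
    (E : Set (Fin d → ℤ))
    (hpath : ∃ (p : ℕ → (Fin d → ℤ)) (n : ℕ), IsNNPathIn E p n ∧
      p 0 = 0 ∧ norm1 (p n) = N * d) :
    ∃ π : ℕ → ℕ → (Fin d → ℤ),
      (∀ n < N / c₆,
        norm1 (π n 0) = n * c₆ * d ∧
        (∀ i < ⌊ℓ * (d : ℝ)⌋₊, norm1 (π n (i + 1) - π n i) = 1) ∧
        (∀ i ≤ ⌊ℓ * (d : ℝ)⌋₊, π n i ∈ E ∧ norm1 (π n i) ≤ N * d) ∧
        (∀ i ≤ ⌊ℓ * (d : ℝ)⌋₊, ∀ j ≤ ⌊ℓ * (d : ℝ)⌋₊, π n i = π n j → i = j)) ∧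
      ∀ n m, n < m → m < N / c₆ →
        ∀ i ≤ ⌊ℓ * (d : ℝ)⌋₊, ∀ j ≤ ⌊ℓ * (d : ℝ)⌋₊,
          (c₆ - 2) * d ≤ norm1 (π n i - π m j) :=
  stmt15_general d c₆ N ℓ hℓ1 E hpath
end
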